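/- Fix β > 0. Then lim_{N→∞} (1/N)·ln g_{Nβ} = 1 − ln√(2π) + β/2 − (β/2)·ln(β/2) + ln Γ(1+β/2); equivalently, g_{Nβ}^{1/N} converges to C_β = exp(1 − ln√(2π) + β/2 − (β/2)·ln(β/2)) · Γ(1+β/2). -/

import Mathlib

/-!
Taking logarithms, `log g_{Nβ}` is a combination of elementary logarithms and of `log Γ` at
`N_β/2`, `(N-1)/2` and `1 + jβ/2` for `j ≤ N`. Stirling's formula
`log Γ x = (x - 1/2) log x - x + log(2π)/2 + o(1)`, which for real `x` follows from the factorial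
case because `log Γ` is convex, turns each of these into elementary terms. The terms of order
`N² log N` and `N log N` then cancel exactly, `((N_β - 1)/2) · log (1 + 2/(β(N-1)))` contributes
`N/2`, and the `N` remainders `o(1)` coming from the product add up to `o(N)` by Cesàro.
-/

open MeasureTheory Real Filter Finset

/-- `N_β = N + βN(N−1)/2`. -/
noncomputable def Nbeta (β : ℝ) (N : ℕ) : ℝ := N + β * N * (N - 1) / 2

/-- The constant `g_{Nβ}` from Proposition 5. -/
noncomputable def gN (β : ℝ) (N : ℕ) : ℝ :=
  Real.exp (β / 2 * ∑ v ∈ Finset.Icc 1 N, (v : ℝ) * Real.log v) *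
    ((N : ℝ) * ((N : ℝ) - 1) / 2) ^ (((N : ℝ) - 2) / 2) *
    Real.Gamma (Nbeta β N / 2) *
    (∏ j ∈ Finset.Icc 1 N, Real.Gamma (1 + β / 2) / Real.Gamma (1 + j * β / 2)) /
    (Real.sqrt Real.pi * Real.Gamma (((N : ℝ) - 1) / 2) *
      ((N : ℝ) * ((N : ℝ) - 1) / 2) ^ ((Nbeta β N - 1) / 2))

open Topology
open scoped Nat

namespace Real

noncomputable def stirlingRemainder (x : ℝ) : ℝ :=
  log (Gamma x) - ((x - 1 / 2) * log x - x + log (2 * π) / 2)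

lemma log_Gamma_eq_stirling_add_remainder (x : ℝ) :
    log (Gamma x) = (x - 1 / 2) * log x - x + log (2 * π) / 2 + stirlingRemainder x := by
  rw [stirlingRemainder]
  ring

lemma log_Gamma_add_one {y : ℝ} (hy : 0 < y) :
    log (Gamma (y + 1)) = log (Gamma y) + log y := by
  rw [Gamma_add_one hy.ne', log_mul hy.ne' (Gamma_pos_of_pos hy).ne', add_comm]

lemma log_Gamma_one_add_eq_stirling_add_remainder {y : ℝ} (hy : 0 < y) :
    log (Gamma (1 + y)) = (y + 1 / 2) * log y - y + log (2 * π) / 2 + stirlingRemainder y := by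
  rw [add_comm, log_Gamma_add_one hy, log_Gamma_eq_stirling_add_remainder]
  ring

lemma log_factorial_eq_stirling_add_remainder {n : ℕ} (hn : n ≠ 0) :
    log n ! = (n + 1 / 2) * log n - n + log (2 * π) / 2 + stirlingRemainder n := by
  rw [← Gamma_nat_eq_factorial, log_Gamma_add_one (by positivity),
    log_Gamma_eq_stirling_add_remainder]
  ring

lemma stirlingRemainder_natCast {n : ℕ} (hn : n ≠ 0) :
    stirlingRemainder n = log (Stirling.stirlingSeq n) - log √π := by
  have hn' : (n : ℝ) ≠ 0 := Nat.cast_ne_zero.mpr hn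
  rw [Stirling.log_stirlingSeq_formula, log_factorial_eq_stirling_add_remainder hn,
    log_mul two_ne_zero hn', log_div hn' (exp_ne_zero 1), log_exp, log_sqrt pi_pos.le,
    log_mul two_ne_zero pi_ne_zero]
  ring

lemma tendsto_stirlingRemainder_natCast :
    Tendsto (fun n : ℕ => stirlingRemainder n) atTop (𝓝 0) := by
  have h := ((continuousAt_log (by positivity)).tendsto.comp
    Stirling.tendsto_stirlingSeq_sqrt_pi).sub_const (log √π)
  rw [sub_self] at h
  refine h.congr' ?_
  filter_upwards [eventually_ne_atTop 0] with n hn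
  exact (stirlingRemainder_natCast hn).symm

lemma abs_mul_log_add_div_sub_le {n t : ℝ} (hn : 1 / 2 ≤ n) (ht0 : 0 ≤ t) (ht1 : t ≤ 1) :
    |(n + t - 1 / 2) * log ((n + t) / n) - t| ≤ 1 / (2 * n) := by
  have hn0 : 0 < n := by linarith
  have hx : 0 < n + t := by linarith
  have hupper : log ((n + t) / n) ≤ t / n := by
    calc log ((n + t) / n) ≤ (n + t) / n - 1 := log_le_sub_one_of_pos (div_pos hx hn0)
      _ = t / n := by rw [add_div, div_self hn0.ne']; ring
  have hlower : t / (n + t) ≤ log ((n + t) / n) :=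
    calc t / (n + t) = 1 - ((n + t) / n)⁻¹ := by field_simp; ring
      _ ≤ log ((n + t) / n) := one_sub_inv_le_log_of_pos (div_pos hx hn0)
  rw [abs_le]
  constructor
  · have h1 := mul_le_mul_of_nonneg_left hlower (by linarith : 0 ≤ n + t - 1 / 2)
    have h2 : -(1 / (2 * n)) ≤ (n + t - 1 / 2) * (t / (n + t)) - t := by
      rw [show (n + t - 1 / 2) * (t / (n + t)) - t = -(t / (2 * (n + t))) by field_simp; ring,
        neg_le_neg_iff]
      gcongr
      linarith
    linarith
  · have h1 := mul_le_mul_of_nonneg_left hupper (by linarith : 0 ≤ n + t - 1 / 2)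
    have h2 : (n + t - 1 / 2) * (t / n) - t ≤ 1 / (2 * n) := by
      rw [show (n + t - 1 / 2) * (t / n) - t = t * (t - 1 / 2) / n by field_simp; ring,
        show 1 / (2 * n) = (1 / 2) / n by ring]
      gcongr
      nlinarith
    linarith

lemma abs_stirlingRemainder_add_sub_le {n : ℕ} (hn : 2 ≤ n) {t : ℝ} (ht0 : 0 ≤ t)
    (ht1 : t ≤ 1) :
    |stirlingRemainder (n + t) - stirlingRemainder n| ≤ log n - log (n - 1) + 1 / (2 * n) := by
  have hn2 : (2 : ℝ) ≤ n := by exact_mod_cast hn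
  have hlog_mono : log (n - 1) ≤ log n := log_le_log (by linarith) (by linarith)
  have hlog : log (n + t) = log n + log ((n + t) / n) := by
    rw [log_div (by linarith) (by linarith)]; ring
  have hΓ : log (Gamma n) + t * log (n - 1) ≤ log (Gamma (n + t)) ∧
      log (Gamma (n + t)) ≤ log (Gamma n) + t * log n := by
    rcases ht0.eq_or_lt with rfl | ht
    · simp
    exact ⟨BohrMollerup.f_add_nat_ge convexOn_log_Gamma (log_Gamma_add_one ·) hn ht,
      BohrMollerup.f_add_nat_le convexOn_log_Gamma (log_Gamma_add_one ·) (by omega) ht ht1⟩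
  have hB := abs_mul_log_add_div_sub_le (by linarith : (1 : ℝ) / 2 ≤ n) ht0 ht1
  rw [abs_le] at hB ⊢
  simp only [stirlingRemainder, hlog]
  constructor <;> nlinarith [hΓ.1, hΓ.2, hB.1, hB.2]

lemma tendsto_stirlingRemainder : Tendsto stirlingRemainder atTop (𝓝 0) := by
  set bound : ℕ → ℝ := fun n => |stirlingRemainder n| + (log n - log (n - 1)) + 1 / (2 * n)
  have hbound : Tendsto bound atTop (𝓝 0) := by
    rw [← tendsto_add_atTop_iff_nat 1]
    have hR := (tendsto_stirlingRemainder_natCast.comp (tendsto_add_atTop_nat 1)).abs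
    have hinv : Tendsto (fun n : ℕ => 1 / (2 * ((n + 1 : ℕ) : ℝ))) atTop (𝓝 0) :=
      tendsto_const_nhds.div_atTop <| (tendsto_natCast_atTop_atTop.comp
        (tendsto_add_atTop_nat 1)).const_mul_atTop two_pos
    simpa [bound] using (hR.add tendsto_log_nat_add_one_sub_log).add hinv
  refine squeeze_zero_norm' ?_ (hbound.comp tendsto_nat_floor_atTop)
  filter_upwards [eventually_ge_atTop 2] with x hx
  have hfloor : 2 ≤ ⌊x⌋₊ := Nat.le_floor (by exact_mod_cast hx)
  have hsplit := abs_stirlingRemainder_add_sub_le hfloor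
    (sub_nonneg.mpr (Nat.floor_le (by linarith))) (by linarith [Nat.lt_floor_add_one x])
  rw [add_sub_cancel] at hsplit
  rw [norm_eq_abs, Function.comp_apply]
  have := abs_sub_abs_le_abs_sub (stirlingRemainder x) (stirlingRemainder ⌊x⌋₊)
  simp only [bound]
  linarith

end Real

lemma Filter.Tendsto.cesaro_Icc {u : ℕ → ℝ} {l : ℝ} (h : Tendsto u atTop (𝓝 l)) :
    Tendsto (fun N : ℕ => (∑ j ∈ Icc 1 N, u j) / N) atTop (𝓝 l) := by
  refine (((tendsto_add_atTop_iff_nat 1).mpr h).cesaro).congr fun N => ?_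
  rw [← Ico_add_one_right_eq_Icc, sum_Ico_eq_sum_range, Nat.add_sub_cancel, inv_mul_eq_div]
  simp only [add_comm]

lemma sum_log_Gamma_one_add_mul {a : ℝ} (ha : 0 < a) (N : ℕ) :
    ∑ j ∈ Icc 1 N, log (Gamma (1 + j * a)) =
      a * ∑ j ∈ Icc 1 N, j * log j + (a * log a - a) * (N * (N + 1) / 2) + log N ! / 2 +
        N * ((log a + log (2 * π)) / 2) + ∑ j ∈ Icc 1 N, stirlingRemainder (j * a) := by
  induction N with
  | zero => simp
  | succ N ih =>
    have hN : (0 : ℝ) < N + 1 := by positivity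
    have hstep := log_Gamma_one_add_eq_stirling_add_remainder (mul_pos hN ha)
    rw [log_mul hN.ne' ha.ne'] at hstep
    simp only [sum_Icc_succ_top (Nat.le_add_left 1 N), ih, Nat.factorial_succ]
    push_cast
    rw [log_mul hN.ne' (by positivity)]
    linear_combination hstep

lemma natCast_le_Nbeta {β : ℝ} (hβ : 0 ≤ β) (N : ℕ) : (N : ℝ) ≤ Nbeta β N := by
  have : 0 ≤ (N : ℝ) * (N - 1) := by
    rcases N with _ | N
    · simp
    · push_cast; nlinarith
  rw [Nbeta]
  nlinarith

lemma tendsto_Nbeta_atTop {β : ℝ} (hβ : 0 ≤ β) : Tendsto (Nbeta β) atTop atTop :=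
  tendsto_atTop_mono (natCast_le_Nbeta hβ) tendsto_natCast_atTop_atTop

lemma Nbeta_pos {β : ℝ} (hβ : 0 ≤ β) {N : ℕ} (hN : N ≠ 0) : 0 < Nbeta β N :=
  (Nat.cast_pos.mpr (Nat.pos_of_ne_zero hN)).trans_le (natCast_le_Nbeta hβ N)

lemma gN_pos {β : ℝ} (hβ : 0 < β) {N : ℕ} (hN : 2 ≤ N) : 0 < gN β N := by
  have hN0 : 0 < N := by omega
  have hN1 : (0 : ℝ) < N - 1 := sub_pos.mpr (Nat.one_lt_cast.mpr hN)
  have hNbeta := Nbeta_pos hβ.le hN0.ne'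
  unfold gN
  positivity

lemma log_gN_eq_log_Gamma {β : ℝ} (hβ : 0 < β) {N : ℕ} (hN : 2 ≤ N) :
    log (gN β N) = β / 2 * ∑ v ∈ Icc 1 N, (v : ℝ) * log v
      + ((N - 2) / 2 - (Nbeta β N - 1) / 2) * log (N * (N - 1) / 2) + log (Gamma (Nbeta β N / 2))
      + N * log (Gamma (1 + β / 2)) - ∑ j ∈ Icc 1 N, log (Gamma (1 + j * β / 2))
      - log π / 2 - log (Gamma ((N - 1) / 2)) := by
  have hN0 : 0 < N := by omega
  have hN1 : (0 : ℝ) < N - 1 := sub_pos.mpr (Nat.one_lt_cast.mpr hN)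
  have hNbeta := Nbeta_pos hβ.le hN0.ne'
  have hM : (0 : ℝ) < N * (N - 1) / 2 := by positivity
  rw [gN, log_div (by positivity) (by positivity), log_mul (by positivity) (by positivity),
    log_mul (by positivity) (by positivity), log_mul (by positivity) (by positivity),
    log_mul (by positivity) (by positivity), log_mul (by positivity) (by positivity), log_exp,
    log_rpow hM, log_rpow hM, log_sqrt pi_pos.le, log_prod (fun j _ => by positivity)]
  rw [sum_congr rfl fun j _ => log_div (by positivity) (by positivity), sum_sub_distrib,
    sum_const, Nat.card_Icc, Nat.add_sub_cancel, nsmul_eq_mul]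
  ring

lemma log_gN_eq_stirling {β : ℝ} (hβ : 0 < β) {N : ℕ} (hN : 2 ≤ N) :
    log (gN β N) =
      N * (1 - log √(2 * π) + β / 2 - β / 2 * log (β / 2) + log (Gamma (1 + β / 2)))
      + ((Nbeta β N - 1) / 2 * log (1 + 2 / β / (N - 1)) - N / 2) - 5 / 4 * log N
      - (log (β / 2) + 1 + log (2 * π) / 2 + log π) / 2
      + stirlingRemainder (Nbeta β N / 2) - stirlingRemainder ((N - 1) / 2)
      - stirlingRemainder N / 2 - ∑ j ∈ Icc 1 N, stirlingRemainder (j * (β / 2)) := by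
  have hN0 : (0 : ℝ) < N := by positivity
  have hN1 : (0 : ℝ) < N - 1 := sub_pos.mpr (Nat.one_lt_cast.mpr hN)
  have hsum : ∑ j ∈ Icc 1 N, log (Gamma (1 + j * β / 2)) =
      ∑ j ∈ Icc 1 N, log (Gamma (1 + j * (β / 2))) := by
    simp only [mul_div_assoc]
  have hM : log (N * (N - 1) / 2) = log N + log ((N - 1) / 2) := by
    rw [mul_div_assoc, log_mul hN0.ne' (by positivity)]
  have hNbeta : log (Nbeta β N / 2) =
      log (β / 2) + log (N * (N - 1) / 2) + log (1 + 2 / β / (N - 1)) := by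
    have hfactor : Nbeta β N / 2 = β / 2 * (N * (N - 1) / 2) * (1 + 2 / β / (N - 1)) := by
      rw [Nbeta]
      field_simp
      ring
    rw [hfactor, log_mul (by positivity) (by positivity), log_mul (by positivity) (by positivity)]
  rw [log_gN_eq_log_Gamma hβ hN, hsum, sum_log_Gamma_one_add_mul (half_pos hβ),
    log_factorial_eq_stirling_add_remainder (by omega),
    log_Gamma_eq_stirling_add_remainder (Nbeta β N / 2),
    log_Gamma_eq_stirling_add_remainder ((N - 1) / 2), hNbeta, hM, log_sqrt (by positivity)]
  simp only [Nbeta]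
  ring

lemma tendsto_natCast_sub_one_atTop : Tendsto (fun N : ℕ => (N : ℝ) - 1) atTop atTop := by
  simpa only [sub_eq_add_neg] using tendsto_atTop_add_const_right atTop (-1 : ℝ)
    tendsto_natCast_atTop_atTop

lemma tendsto_Nbeta_mul_log_div {β : ℝ} (hβ : 0 < β) :
    Tendsto (fun N : ℕ => (Nbeta β N - 1) / 2 * log (1 + 2 / β / (N - 1)) / N) atTop
      (𝓝 (1 / 2)) := by
  have hlog :
      Tendsto (fun N : ℕ => ((N : ℝ) - 1) * log (1 + 2 / β / (N - 1))) atTop (𝓝 (2 / β)) :=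
    (tendsto_mul_log_one_add_div_atTop (2 / β)).comp tendsto_natCast_sub_one_atTop
  have hcoeff : Tendsto (fun N : ℕ => β / 4 + 1 / (2 * N)) atTop (𝓝 (β / 4 + 0)) :=
    tendsto_const_nhds.add <| tendsto_const_nhds.div_atTop <|
      tendsto_natCast_atTop_atTop.const_mul_atTop two_pos
  have hlim : (β / 4 + 0) * (2 / β) = 1 / 2 := by field_simp; ring
  rw [← hlim]
  refine (hcoeff.mul hlog).congr' ?_
  filter_upwards [eventually_ne_atTop 0] with N hN
  have : (N : ℝ) ≠ 0 := Nat.cast_ne_zero.mpr hN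
  rw [Nbeta]
  field_simp
  ring

lemma tendsto_log_gN_div {β : ℝ} (hβ : 0 < β) :
    Tendsto (fun N : ℕ => 1 / (N : ℝ) * log (gN β N)) atTop
      (𝓝 (1 - log √(2 * π) + β / 2 - β / 2 * log (β / 2) + log (Gamma (1 + β / 2)))) := by
  have hlogN : Tendsto (fun N : ℕ => 5 / 4 * (log N / N)) atTop (𝓝 0) := by
    simpa using ((isLittleO_log_id_atTop.tendsto_div_nhds_zero.comp
      tendsto_natCast_atTop_atTop).const_mul (5 / 4 : ℝ))
  have hRemainders : Tendsto (fun N : ℕ => (-(log (β / 2) + 1 + log (2 * π) / 2 + log π) / 2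
      + stirlingRemainder (Nbeta β N / 2) - stirlingRemainder ((N - 1) / 2)
      - stirlingRemainder N / 2) / N) atTop (𝓝 0) := by
    have h₁ := tendsto_stirlingRemainder.comp
      ((tendsto_Nbeta_atTop hβ.le).atTop_div_const two_pos)
    have h₂ := tendsto_stirlingRemainder.comp
      (tendsto_natCast_sub_one_atTop.atTop_div_const two_pos)
    have h₃ := tendsto_stirlingRemainder_natCast.div_const 2
    exact (((tendsto_const_nhds.add h₁).sub h₂).sub h₃).div_atTop tendsto_natCast_atTop_atTop
  have hCesaro := (tendsto_stirlingRemainder.comp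
    (tendsto_natCast_atTop_atTop.atTop_mul_const (half_pos hβ))).cesaro_Icc
  have hlim := ((((tendsto_Nbeta_mul_log_div hβ).sub_const (1 / 2)).sub hlogN).add
    hRemainders).sub hCesaro
  rw [sub_self, sub_zero, add_zero, sub_zero] at hlim
  rw [← tendsto_sub_nhds_zero_iff]
  refine hlim.congr' ?_
  filter_upwards [eventually_ge_atTop 2] with N hN
  have : (N : ℝ) ≠ 0 := by positivity
  simp only [log_gN_eq_stirling hβ hN, Function.comp_apply]
  field_simp
  ring

lemma tendsto_rpow_of_tendsto_mul_log {α : Type*} {l : Filter α} {a e : α → ℝ} {L : ℝ}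
    (ha : ∀ᶠ x in l, 0 < a x) (h : Tendsto (fun x => e x * log (a x)) l (𝓝 L)) :
    Tendsto (fun x => a x ^ e x) l (𝓝 (exp L)) := by
  refine ((continuous_exp.tendsto L).comp h).congr' ?_
  filter_upwards [ha] with x hx
  rw [Function.comp_apply, rpow_def_of_pos hx, mul_comm]

/-- Asymptotics of `g_{Nβ}`: `(1/N)·ln g_{Nβ} → 1 − ln√(2π) + β/2 − (β/2)ln(β/2) + ln Γ(1+β/2)`;
equivalently `g_{Nβ}^{1/N} → C_β`. -/
theorem gN_root_limit (β : ℝ) (hβ : 0 < β) :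
    Tendsto (fun N : ℕ => 1 / (N : ℝ) * Real.log (gN β N)) atTop
      (nhds (1 - Real.log (Real.sqrt (2 * Real.pi)) + β / 2 - β / 2 * Real.log (β / 2) +
        Real.log (Real.Gamma (1 + β / 2)))) ∧
    Tendsto (fun N : ℕ => gN β N ^ (1 / (N : ℝ))) atTop
      (nhds (Real.exp (1 - Real.log (Real.sqrt (2 * Real.pi)) + β / 2 -
        β / 2 * Real.log (β / 2)) * Real.Gamma (1 + β / 2))) := by
  have hlog := tendsto_log_gN_div hβ
  refine ⟨hlog, ?_⟩
  rw [← exp_log (Gamma_pos_of_pos (by positivity : 0 < 1 + β / 2)), ← exp_add]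
  exact tendsto_rpow_of_tendsto_mul_log
    ((eventually_ge_atTop 2).mono fun _ hN => gN_pos hβ hN) hlog
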